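/- Lindenbaum lemma for GTL: if Γ⊬Δ, then there exists a complete type Φ=(Φ⁺,Φ⁻) with Γ⊆Φ⁺ and Δ⊆Φ⁻. -/

import Mathlib

/-- Formulas of the Gödel temporal language. -/
inductive GF where
  | var : Nat → GF
  | and : GF → GF → GF
  | or : GF → GF → GF
  | imp : GF → GF → GF
  | coimp : GF → GF → GF
  | next : GF → GF
  | dia : GF → GF
  | box : GF → GF
deriving DecidableEq

/-- ⊥ := p ⇐ p -/
def GF.bot : GF := .coimp (.var 0) (.var 0)
/-- ⊤ := p ⇒ p -/
def GF.top : GF := .imp (.var 0) (.var 0)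
/-- ¬φ := φ ⇒ ⊥ -/
def GF.neg (φ : GF) : GF := .imp φ .bot
/-- φ ⟺ ψ := (φ⇒ψ) ∧ (ψ⇒φ) -/
def GF.iffF (φ ψ : GF) : GF := .and (.imp φ ψ) (.imp ψ φ)

/-- The deductive calculus GTL. Intuitionistic tautologies are generated by a
standard Hilbert-style axiomatization of intuitionistic propositional logic. -/
inductive GTL : GF → Prop where
  -- intuitionistic axioms
  | i1 (φ ψ : GF) : GTL (.imp φ (.imp ψ φ))
  | i2 (φ ψ χ : GF) : GTL (.imp (.imp φ (.imp ψ χ)) (.imp (.imp φ ψ) (.imp φ χ)))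
  | i3 (φ ψ : GF) : GTL (.imp (.and φ ψ) φ)
  | i4 (φ ψ : GF) : GTL (.imp (.and φ ψ) ψ)
  | i5 (φ ψ : GF) : GTL (.imp φ (.imp ψ (.and φ ψ)))
  | i6 (φ ψ : GF) : GTL (.imp φ (.or φ ψ))
  | i7 (φ ψ : GF) : GTL (.imp ψ (.or φ ψ))
  | i8 (φ ψ χ : GF) : GTL (.imp (.imp φ χ) (.imp (.imp ψ χ) (.imp (.or φ ψ) χ)))
  | i9 (φ : GF) : GTL (.imp .bot φ)
  -- H-B axioms and rules
  | hb1 (φ ψ : GF) : GTL (.imp φ (.or ψ (.coimp φ ψ)))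
  | hbMon {φ ψ : GF} (θ : GF) : GTL (.imp φ ψ) → GTL (.imp (.coimp φ θ) (.coimp ψ θ))
  | hbDis {φ ψ γ : GF} : GTL (.imp φ (.or ψ γ)) → GTL (.imp (.coimp φ ψ) γ)
  -- linearity axioms
  | lin (φ ψ : GF) : GTL (.or (.imp φ ψ) (.imp ψ φ))
  | colin (φ ψ : GF) : GTL (GF.neg (.and (.coimp φ ψ) (.coimp ψ φ)))
  -- temporal axioms
  | nBot : GTL (GF.neg (.next .bot))
  | nOr (φ ψ : GF) : GTL (.imp (.next (.or φ ψ)) (.or (.next φ) (.next ψ)))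
  | nAnd (φ ψ : GF) : GTL (.imp (.and (.next φ) (.next ψ)) (.next (.and φ ψ)))
  | nImp (φ ψ : GF) : GTL (GF.iffF (.next (.imp φ ψ)) (.imp (.next φ) (.next ψ)))
  | kBox (φ ψ : GF) : GTL (.imp (.box (.imp φ ψ)) (.imp (.box φ) (.box ψ)))
  | kDia (φ ψ : GF) : GTL (.imp (.box (.imp φ ψ)) (.imp (.dia φ) (.dia ψ)))
  | boxFix (φ : GF) : GTL (.imp (.box φ) (.and φ (.next (.box φ))))
  | diaFix (φ : GF) : GTL (.imp (.or φ (.next (.dia φ))) (.dia φ))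
  | indBox (φ : GF) : GTL (.imp (.box (.imp φ (.next φ))) (.imp φ (.box φ)))
  | indDia (φ : GF) : GTL (.imp (.box (.imp (.next φ) φ)) (.imp (.dia φ) φ))
  -- back–up confluence axiom
  | backup (φ ψ : GF) : GTL (.imp (.next (.coimp φ ψ)) (.coimp (.next φ) (.next ψ)))
  -- standard modal rules
  | mp {φ ψ : GF} : GTL φ → GTL (.imp φ ψ) → GTL ψ
  | necN {φ : GF} : GTL φ → GTL (.next φ)
  | necBox {φ : GF} : GTL φ → GTL (.box φ)

/-- Finite conjunction (⋀∅ = ⊤). -/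
def GF.conj : List GF → GF := fun l => l.foldr .and .top
/-- Finite disjunction (⋁∅ = ⊥). -/
def GF.disj : List GF → GF := fun l => l.foldr .or .bot

/-- Gentzen-style consequence: Γ ⊢ Δ iff ⋀Γ' ⇒ ⋁Δ' ∈ GTL for some finite
Γ' ⊆ Γ, Δ' ⊆ Δ. -/
def GSeq (Γ Δ : Set GF) : Prop :=
  ∃ l m : List GF, (∀ φ ∈ l, φ ∈ Γ) ∧ (∀ φ ∈ m, φ ∈ Δ) ∧
    GTL (.imp (GF.conj l) (GF.disj m))

/-- A complete type: a consistent saturated pair. -/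
def CompleteType (P N : Set GF) : Prop :=
  ¬ GSeq P N ∧ ∀ φ : GF, φ ∈ P ∨ φ ∈ N

/-- The canonical order: Φ ≤ Ψ iff Φ⁻ ⊆ Ψ⁻ and Φ⁺ ⊇ Ψ⁺. -/
def TLe (Φ Ψ : Set GF × Set GF) : Prop := Φ.2 ⊆ Ψ.2 ∧ Ψ.1 ⊆ Φ.1

/-- The canonical successor: S(Φ) = (⊖Φ⁺, ⊖Φ⁻). -/
def TSucc (Φ : Set GF × Set GF) : Set GF × Set GF :=
  ({φ | GF.next φ ∈ Φ.1}, {φ | GF.next φ ∈ Φ.2})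

/-! Extend `(Γ, Δ)` by Zorn's lemma to a maximal unprovable pair: unprovability has finite
character, so it passes to unions of chains. A maximal pair is saturated because a formula that
could be added to neither side would give `Γ, φ ⊢ Δ` and `Γ ⊢ φ, Δ`, and these cut to `Γ ⊢ Δ`. -/

namespace GTL

theorem imp_of {ψ : GF} (h : GTL ψ) (φ : GF) : GTL (.imp φ ψ) :=
  mp h (i1 ψ φ)

theorem imp_mp {A B C : GF} (h₁ : GTL (.imp A (.imp B C))) (h₂ : GTL (.imp A B)) :
    GTL (.imp A C) :=
  mp h₂ (mp h₁ (i2 A B C))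

theorem imp_self (φ : GF) : GTL (.imp φ φ) :=
  imp_mp (i1 φ (.imp φ φ)) (i1 φ φ)

theorem top : GTL GF.top := imp_self _

theorem imp_trans {A B C : GF} (h₁ : GTL (.imp A B)) (h₂ : GTL (.imp B C)) :
    GTL (.imp A C) :=
  imp_mp (imp_of h₂ A) h₁

theorem imp_and {A B C : GF} (h₁ : GTL (.imp A B)) (h₂ : GTL (.imp A C)) :
    GTL (.imp A (.and B C)) :=
  imp_mp (imp_trans h₁ (i5 B C)) h₂

theorem or_imp {A B C : GF} (h₁ : GTL (.imp A C)) (h₂ : GTL (.imp B C)) :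
    GTL (.imp (.or A B) C) :=
  mp h₂ (mp h₁ (i8 A B C))

theorem imp_mono_right {X Y : GF} (B : GF) (h : GTL (.imp X Y)) :
    GTL (.imp (.imp B X) (.imp B Y)) :=
  mp (imp_of h B) (i2 B X Y)

theorem curry {A B C : GF} (h : GTL (.imp (.and A B) C)) : GTL (.imp A (.imp B C)) :=
  imp_trans (i5 A B) (imp_mono_right B h)

theorem imp_or_of_cut {A D E φ : GF} (h₁ : GTL (.imp A (.or φ E)))
    (h₂ : GTL (.imp (.and φ A) D)) : GTL (.imp A (.or D E)) := by
  have hφ : GTL (.imp φ (.imp A (.or D E))) := imp_trans (curry h₂) (imp_mono_right A (i6 D E))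
  have hE : GTL (.imp E (.imp A (.or D E))) := imp_trans (i7 D E) (i1 (.or D E) A)
  exact imp_mp (imp_trans h₁ (or_imp hφ hE)) (imp_self A)

theorem conj_imp_of_mem {φ : GF} : ∀ {l : List GF}, φ ∈ l → GTL (.imp (GF.conj l) φ)
  | a :: l, h => by
    rcases List.mem_cons.1 h with rfl | h
    · exact i3 _ _
    · exact imp_trans (i4 a (GF.conj l)) (conj_imp_of_mem h)

theorem conj_imp_conj_of_subset : ∀ {l l' : List GF}, l ⊆ l' →
    GTL (.imp (GF.conj l') (GF.conj l))
  | [], _, _ => imp_of top _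
  | _ :: _, _, h =>
    imp_and (conj_imp_of_mem (List.cons_subset.1 h).1)
      (conj_imp_conj_of_subset (List.cons_subset.1 h).2)

theorem imp_disj_of_mem {φ : GF} : ∀ {m : List GF}, φ ∈ m → GTL (.imp φ (GF.disj m))
  | a :: m, h => by
    rcases List.mem_cons.1 h with rfl | h
    · exact i6 _ _
    · exact imp_trans (imp_disj_of_mem h) (i7 a (GF.disj m))

theorem disj_imp_disj_of_subset : ∀ {m m' : List GF}, m ⊆ m' →
    GTL (.imp (GF.disj m) (GF.disj m'))
  | [], _, _ => i9 _
  | _ :: _, _, h =>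
    or_imp (imp_disj_of_mem (List.cons_subset.1 h).1)
      (disj_imp_disj_of_subset (List.cons_subset.1 h).2)

end GTL

theorem List.exists_subset_cons_of_forall_mem_insert {α : Type*} [DecidableEq α] {a : α}
    {s : Set α} {l : List α} (h : ∀ x ∈ l, x ∈ insert a s) :
    ∃ l' : List α, (∀ x ∈ l', x ∈ s) ∧ l ⊆ a :: l' := by
  refine ⟨l.filter (· ≠ a), fun x hx => ?_, fun x hx => ?_⟩
  · obtain ⟨hxl, hxa⟩ := List.mem_filter.1 hx
    exact (h x hxl).resolve_left (by simpa using hxa)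
  · by_cases hxa : x = a
    · exact hxa ▸ List.mem_cons_self
    · exact List.mem_cons_of_mem _ (List.mem_filter.2 ⟨hx, by simpa using hxa⟩)

namespace GSeq

theorem exists_of_insert_left {Γ Δ : Set GF} {φ : GF} (h : GSeq (insert φ Γ) Δ) :
    ∃ l m : List GF, (∀ ψ ∈ l, ψ ∈ Γ) ∧ (∀ ψ ∈ m, ψ ∈ Δ) ∧
      GTL (.imp (.and φ (GF.conj l)) (GF.disj m)) := by
  obtain ⟨l, m, hl, hm, hlm⟩ := h
  obtain ⟨l', hl', hll'⟩ := List.exists_subset_cons_of_forall_mem_insert hl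
  exact ⟨l', m, hl', hm, GTL.imp_trans (GTL.conj_imp_conj_of_subset hll') hlm⟩

theorem exists_of_insert_right {Γ Δ : Set GF} {φ : GF} (h : GSeq Γ (insert φ Δ)) :
    ∃ l m : List GF, (∀ ψ ∈ l, ψ ∈ Γ) ∧ (∀ ψ ∈ m, ψ ∈ Δ) ∧
      GTL (.imp (GF.conj l) (.or φ (GF.disj m))) := by
  obtain ⟨l, m, hl, hm, hlm⟩ := h
  obtain ⟨m', hm', hmm'⟩ := List.exists_subset_cons_of_forall_mem_insert hm
  exact ⟨l, m', hl, hm', GTL.imp_trans hlm (GTL.disj_imp_disj_of_subset hmm')⟩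

theorem cut {Γ Δ : Set GF} {φ : GF} (h₁ : GSeq (insert φ Γ) Δ) (h₂ : GSeq Γ (insert φ Δ)) :
    GSeq Γ Δ := by
  obtain ⟨l₁, m₁, hl₁, hm₁, hφ₁⟩ := exists_of_insert_left h₁
  obtain ⟨l₂, m₂, hl₂, hm₂, hφ₂⟩ := exists_of_insert_right h₂
  have hleft : GTL (.imp (.and φ (GF.conj (l₁ ++ l₂))) (GF.disj m₁)) :=
    GTL.imp_trans (GTL.conj_imp_conj_of_subset (l := φ :: l₁) (l' := φ :: (l₁ ++ l₂))
      (List.cons_subset_cons _ (List.subset_append_left _ _))) hφ₁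
  have hright : GTL (.imp (GF.conj (l₁ ++ l₂)) (.or φ (GF.disj m₂))) :=
    GTL.imp_trans (GTL.conj_imp_conj_of_subset (List.subset_append_right _ _)) hφ₂
  have hdisj : GTL (.imp (.or (GF.disj m₁) (GF.disj m₂)) (GF.disj (m₁ ++ m₂))) :=
    GTL.or_imp (GTL.disj_imp_disj_of_subset (List.subset_append_left _ _))
      (GTL.disj_imp_disj_of_subset (List.subset_append_right _ _))
  exact ⟨l₁ ++ l₂, m₁ ++ m₂, List.forall_mem_append.2 ⟨hl₁, hl₂⟩,
    List.forall_mem_append.2 ⟨hm₁, hm₂⟩, GTL.imp_trans (GTL.imp_or_of_cut hright hleft) hdisj⟩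

theorem exists_mem_of_biUnion {c : Set (Set GF × Set GF)} (hc : DirectedOn (· ≤ ·) c)
    (hne : c.Nonempty) (h : GSeq (⋃ Φ ∈ c, Φ.1) (⋃ Φ ∈ c, Φ.2)) : ∃ Φ ∈ c, GSeq Φ.1 Φ.2 := by
  obtain ⟨l, m, hl, hm, hlm⟩ := h
  obtain ⟨Φ₁, hΦ₁, hl₁⟩ := DirectedOn.exists_mem_subset_of_finset_subset_biUnion
    (f := Prod.fst) (s := l.toFinset) hne (hc.mono fun _ _ h => h.1)
    fun φ hφ => hl φ (List.mem_toFinset.1 hφ)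
  obtain ⟨Φ₂, hΦ₂, hm₂⟩ := DirectedOn.exists_mem_subset_of_finset_subset_biUnion
    (f := Prod.snd) (s := m.toFinset) hne (hc.mono fun _ _ h => h.2)
    fun φ hφ => hm φ (List.mem_toFinset.1 hφ)
  obtain ⟨Φ, hΦ, hΦ₁Φ, hΦ₂Φ⟩ := hc Φ₁ hΦ₁ Φ₂ hΦ₂
  exact ⟨Φ, hΦ, l, m, fun φ hφ => hΦ₁Φ.1 (hl₁ (List.mem_toFinset.2 hφ)),
    fun φ hφ => hΦ₂Φ.2 (hm₂ (List.mem_toFinset.2 hφ)), hlm⟩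

end GSeq

theorem exists_maximal_not_gSeq {Γ Δ : Set GF} (h : ¬ GSeq Γ Δ) :
    ∃ Φ : Set GF × Set GF, (Γ, Δ) ≤ Φ ∧ Maximal (fun Ψ => ¬ GSeq Ψ.1 Ψ.2) Φ := by
  refine zorn_le_nonempty₀ {Ψ : Set GF × Set GF | ¬ GSeq Ψ.1 Ψ.2}
    (fun c hcons hchain Ψ hΨ => ?_) _ h
  refine ⟨(⋃ Φ ∈ c, Φ.1, ⋃ Φ ∈ c, Φ.2), fun hseq => ?_, fun Φ hΦ => ?_⟩
  · obtain ⟨Φ, hΦ, hΦseq⟩ := GSeq.exists_mem_of_biUnion hchain.directedOn ⟨Ψ, hΨ⟩ hseq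
    exact hcons hΦ hΦseq
  · exact ⟨Set.subset_biUnion_of_mem (u := Prod.fst) hΦ,
      Set.subset_biUnion_of_mem (u := Prod.snd) hΦ⟩

theorem completeType_of_maximal {Φ : Set GF × Set GF}
    (hΦ : Maximal (fun Ψ => ¬ GSeq Ψ.1 Ψ.2) Φ) : CompleteType Φ.1 Φ.2 := by
  refine ⟨hΦ.1, fun φ => ?_⟩
  by_contra! hφ
  have hleft : GSeq (insert φ Φ.1) Φ.2 := by
    by_contra hcons
    have hle := hΦ.2 (y := (insert φ Φ.1, Φ.2)) hcons ⟨Set.subset_insert φ Φ.1, subset_rfl⟩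
    exact hφ.1 (hle.1 (Set.mem_insert φ Φ.1))
  have hright : GSeq Φ.1 (insert φ Φ.2) := by
    by_contra hcons
    have hle := hΦ.2 (y := (Φ.1, insert φ Φ.2)) hcons ⟨subset_rfl, Set.subset_insert φ Φ.2⟩
    exact hφ.2 (hle.2 (Set.mem_insert φ Φ.2))
  exact hΦ.1 (hleft.cut hright)

/-- Lindenbaum lemma: if Γ ⊬ Δ then some complete type extends (Γ,Δ). -/
theorem stmt14 (Γ Δ : Set GF) (h : ¬ GSeq Γ Δ) :
    ∃ P N : Set GF, CompleteType P N ∧ Γ ⊆ P ∧ Δ ⊆ N := by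
  obtain ⟨Φ, ⟨hΓ, hΔ⟩, hΦ⟩ := exists_maximal_not_gSeq h
  exact ⟨Φ.1, Φ.2, completeType_of_maximal hΦ, hΓ, hΔ⟩
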